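/- arXiv:1111.2170 — 4 statements merged into one kernel-verified Lean document; each statement's English description precedes it below -/
import Mathlib

section
/- For all n ≥ 0, the derangement cycle-counting polynomial satisfies the closed form d_n(β) = (-1)^n n! Σ_{i=0}^{n} (β^i/i!) C(-β, n-i), where C(-β, k) = (-β)(-β-1)···(-β-k+1)/k! is the generalized binomial coefficient. -/
open Finset

/-- Number of cycles of a permutation, counting fixed points as 1-cycles. -/
def permNumCycles {n : ℕ} (σ : Equiv.Perm (Fin n)) : ℕ :=
  σ.cycleType.card + (n - σ.cycleType.sum)

/-- `d_n(β) = Σ_{σ derangement of [n]} β^{K(σ)}`, with `β = X`. -/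
noncomputable def dPoly (n : ℕ) : Polynomial ℚ :=
  ∑ σ ∈ Finset.univ.filter (fun σ : Equiv.Perm (Fin n) => ∀ i, σ i ≠ i),
    Polynomial.X ^ permNumCycles σ

/-- Generalized binomial coefficient `C(p,k) = p(p-1)⋯(p-k+1)/k!` for a polynomial `p`. -/
noncomputable def genBinom (p : Polynomial ℚ) (k : ℕ) : Polynomial ℚ :=
  (k.factorial : ℚ)⁻¹ • ∏ j ∈ Finset.range k, (p - (j : ℚ) • 1)

/-!
Summing `β ^ K(σ)` over all permutations of `n` points gives the rising factorial
`β^(n) = β (β + 1) ⋯ (β + n - 1)`: a permutation of `n + 1` points arises from one of `n` points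
either by adding the new point as a fixed point (one more cycle) or by splicing it into an existing
cycle (`n` ways, same number of cycles). Sorting permutations by their fixed points shows that
`β^(n) = ∑ₖ C(n,k) βᵏ d_{n-k}` is the binomial transform of `d` with parameter `β`. Binomial
transforms compose additively in the parameter, so the one with parameter `-β` inverts it:
`d_n = ∑ₖ C(n,k) (-β)ᵏ β^(n-k)`, which is the closed form since `C(-β, k) = (-1)ᵏ β^(k) / k!`.
-/

section BinomialTransform

variable {R : Type*} [CommRing R]

def binomialTransform (x : R) (b : ℕ → R) (n : ℕ) : R :=
  ∑ k ∈ range (n + 1), n.choose k * x ^ k * b (n - k)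

theorem binomialTransform_zero (b : ℕ → R) : binomialTransform 0 b = b := by
  ext n
  rw [binomialTransform, sum_range_succ', sum_eq_zero fun k _ => by simp]
  simp

theorem binomialTransform_binomialTransform (x y : R) (b : ℕ → R) :
    binomialTransform y (binomialTransform x b) = binomialTransform (x + y) b := by
  ext n
  have hswap : ∀ k m, k ∈ range (n + 1) ∧ m ∈ Ico k (n + 1) ↔
      k ∈ range (m + 1) ∧ m ∈ range (n + 1) := by
    intro k m
    simp only [mem_range, mem_Ico]
    omega
  calc binomialTransform y (binomialTransform x b) n
      = ∑ k ∈ range (n + 1), ∑ j ∈ range (n + 1 - k),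
          n.choose (k + j) * (y ^ k * x ^ (k + j - k) * (k + j).choose k) * b (n - (k + j)) := by
        refine sum_congr rfl fun k hk => ?_
        have hkn : k ≤ n := Nat.lt_succ_iff.mp (mem_range.mp hk)
        rw [binomialTransform, mul_sum, ← Nat.sub_add_comm hkn]
        refine sum_congr rfl fun j _ => ?_
        have hchoose :=
          congrArg (Nat.cast : ℕ → R) (Nat.choose_mul (n := n) (Nat.le_add_right k j))
        rw [Nat.add_sub_cancel_left] at hchoose ⊢
        push_cast at hchoose
        rw [← Nat.sub_sub]
        linear_combination (-(y ^ k * x ^ j * b (n - k - j))) * hchoose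
    _ = ∑ m ∈ range (n + 1), ∑ k ∈ range (m + 1),
          n.choose m * (y ^ k * x ^ (m - k) * m.choose k) * b (n - m) := by
        rw [← sum_comm' hswap]
        exact sum_congr rfl fun k _ => (sum_Ico_eq_sum_range (fun m =>
          n.choose m * (y ^ k * x ^ (m - k) * m.choose k) * b (n - m)) k (n + 1)).symm
    _ = binomialTransform (x + y) b n := by
        simp only [binomialTransform, add_comm x y, add_pow, mul_sum, sum_mul]

theorem binomialTransform_neg_binomialTransform (x : R) (b : ℕ → R) :
    binomialTransform (-x) (binomialTransform x b) = b := by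
  rw [binomialTransform_binomialTransform, add_neg_cancel, binomialTransform_zero]

end BinomialTransform

namespace Equiv.Perm

variable {α β : Type*} [Fintype α] [DecidableEq α] [Fintype β] [DecidableEq β]

def numCycles (σ : Perm α) : ℕ :=
  Multiset.card σ.cycleType + (Fintype.card α - #σ.support)

theorem numCycles_extendDomain {p : β → Prop} [DecidablePred p] (f : α ≃ Subtype p)
    (g : Perm α) : (g.extendDomain f).numCycles = g.numCycles + Fintype.card {b // ¬p b} := by
  have hcard : Fintype.card β = Fintype.card α + Fintype.card {b // ¬p b} := by
    rw [Fintype.card_congr f, Fintype.card_subtype_compl, Nat.add_sub_cancel'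
      (Fintype.card_subtype_le p)]
  have := card_le_univ g.support
  rw [numCycles, numCycles, cycleType_extendDomain, card_support_extend_domain, hcard]
  omega

theorem numCycles_permCongr (e : α ≃ β) (σ : Perm α) :
    (e.permCongr σ).numCycles = σ.numCycles := by
  have h : e.permCongr σ =
      σ.extendDomain (e.trans (Equiv.subtypeUnivEquiv fun _ => trivial).symm) := by
    ext b
    rw [extendDomain_apply_subtype _ _ trivial]
    simp
  rw [h, numCycles_extendDomain]
  simp

theorem numCycles_optionCongr (σ : Perm α) :
    numCycles σ.optionCongr = σ.numCycles + 1 := by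
  have h : σ.optionCongr = σ.extendDomain (optionIsSomeEquiv α).symm := by
    refine Equiv.ext fun o => ?_
    cases o with
    | none => rw [extendDomain_apply_not_subtype _ _ (by simp)]; simp
    | some a =>
      simpa [optionIsSomeEquiv] using
        (extendDomain_apply_image σ (optionIsSomeEquiv α).symm a).symm
  rw [h, numCycles_extendDomain]
  simp

theorem numCycles_ofSubtype {p : α → Prop} [DecidablePred p] (τ : Perm (Subtype p)) :
    (ofSubtype τ).numCycles = τ.numCycles + Fintype.card {a // ¬p a} :=
  numCycles_extendDomain (Equiv.refl _) τ

theorem support_swap_mul_of_apply_eq {g : Perm α} {x y : α} (hx : g x = x) (hy : g y ≠ y) :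
    (swap x y * g).support = insert x g.support := by
  ext z
  have := g.injective.eq_iff (a := z) (b := x)
  simp only [mem_support, mem_insert, mul_apply, swap_apply_def]
  grind

theorem IsCycle.swap_mul_of_apply_eq {c : Perm α} (hc : c.IsCycle) {x y : α} (hx : c x = x)
    (hy : c y ≠ y) : (swap x y * c).IsCycle := by
  have hxy : x ≠ y := fun h => hy (h ▸ hx)
  have hfx : (swap x y * c) x = y := by simp [hx]
  -- the orbit of `y` under `c` is traversed by `swap x y * c` right after `x`
  have orbit : ∀ k : ℕ, (swap x y * c).SameCycle x ((c ^ k) y) := by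
    intro k
    induction k with
    | zero => exact ⟨1, by simpa using hfx⟩
    | succ k ih =>
      by_cases hk : (c ^ (k + 1)) y = y
      · rw [hk]; exact ⟨1, by simpa using hfx⟩
      have hkx : (c ^ (k + 1)) y ≠ x := fun h =>
        mem_support.mp (h ▸ pow_apply_mem_support.mpr (mem_support.mpr hy)) hx
      refine ih.trans ⟨1, ?_⟩
      rw [zpow_one, mul_apply, ← mul_apply c, ← pow_succ', swap_apply_of_ne_of_ne hkx hk]
  refine ⟨x, hfx.trans_ne hxy.symm, fun z hz => ?_⟩
  rw [← mem_support, support_swap_mul_of_apply_eq hx hy, mem_insert] at hz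
  obtain rfl | hz := hz
  · rfl
  obtain ⟨k, -, -, rfl⟩ := (hc.sameCycle hy (mem_support.mp hz)).exists_pow_eq c
  exact orbit k

theorem card_cycleType_swap_mul_of_apply_ne {g : Perm α} {x y : α} (hx : g x = x)
    (hy : g y ≠ y) : Multiset.card (swap x y * g).cycleType = Multiset.card g.cycleType := by
  -- split off the cycle `c` of `y`; the swap only enlarges `c`
  set c := g.cycleOf y
  have hc : c ∈ g.cycleFactorsFinset := cycleOf_mem_cycleFactorsFinset_iff.mpr (mem_support.mpr hy)
  have hcy : c y ≠ y := by simpa [c] using hy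
  have hcx : c x = x := by simp [c, cycleOf_apply, hx]
  set t := g * c⁻¹
  have htc : t.Disjoint c := disjoint_mul_inv_of_mem_cycleFactorsFinset hc
  have hty : t y = y := (htc y).resolve_right hcy
  have htx : t x = x := by
    rw [show t x = g (c⁻¹ x) from rfl, inv_eq_iff_eq.mpr hcx.symm, hx]
  have hgt : g = t * c := (inv_mul_cancel_right g c).symm
  have hcomm : swap x y * g = t * (swap x y * c) := by
    rw [← mul_assoc, mul_swap_eq_swap_mul, htx, hty, mul_assoc, ← hgt]
  have hmerged : (swap x y * c).IsCycle := (isCycle_cycleOf g hy).swap_mul_of_apply_eq hcx hcy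
  have htd : t.Disjoint (swap x y * c) := by
    rw [disjoint_iff_disjoint_support, support_swap_mul_of_apply_eq hcx hcy,
      Finset.disjoint_insert_right, notMem_support]
    exact ⟨htx, disjoint_iff_disjoint_support.mp htc⟩
  rw [hcomm, htd.cycleType_mul, hmerged.cycleType, hgt, htc.cycleType_mul,
    (isCycle_cycleOf g hy).cycleType]
  simp

theorem numCycles_swap_mul_of_apply_eq {g : Perm α} {x y : α} (hx : g x = x) (hxy : x ≠ y) :
    (swap x y * g).numCycles + 1 = g.numCycles := by
  by_cases hy : g y = y
  · have hd : (swap x y).Disjoint g := by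
      intro z
      by_cases hz : z = x ∨ z = y
      · obtain rfl | rfl := hz <;> simp [hx, hy]
      · push Not at hz; exact .inl (swap_apply_of_ne_of_ne hz.1 hz.2)
    have hle : #g.support + 2 ≤ Fintype.card α := by
      have hxs : x ∉ g.support := notMem_support.mpr hx
      have hys : y ∉ g.support := notMem_support.mpr hy
      have := card_le_univ (insert x (insert y g.support))
      rw [card_insert_of_notMem (by simp [hxs, hxy]), card_insert_of_notMem hys] at this
      omega
    rw [numCycles, numCycles, hd.cycleType_mul, hd.card_support_mul, card_support_swap hxy,
      (isCycle_swap hxy).cycleType, card_support_swap hxy]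
    simp only [Multiset.card_add, Multiset.card_singleton]
    omega
  · have hxs : x ∉ g.support := notMem_support.mpr hx
    have hlt := card_lt_univ_of_notMem hxs
    rw [numCycles, numCycles, card_cycleType_swap_mul_of_apply_ne hx hy,
      support_swap_mul_of_apply_eq hx hy, card_insert_of_notMem hxs]
    omega

section Sums

variable {M : Type*} [CommSemiring M]

theorem sum_pow_numCycles_congr (e : α ≃ β) (x : M) :
    ∑ σ : Perm α, x ^ σ.numCycles = ∑ σ : Perm β, x ^ σ.numCycles :=
  Fintype.sum_equiv e.permCongr _ _ fun σ => by rw [numCycles_permCongr]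

theorem sum_derangements_pow_numCycles_congr (e : α ≃ β) (x : M) :
    ∑ σ : derangements α, x ^ numCycles (σ : Perm α) =
      ∑ σ : derangements β, x ^ numCycles (σ : Perm β) :=
  Fintype.sum_equiv e.derangementsCongr _ _ fun σ => by
    rw [← numCycles_permCongr e]; rfl

theorem sum_pow_numCycles_option (x : M) :
    ∑ σ : Perm (Option α), x ^ σ.numCycles =
      (x + Fintype.card α) * ∑ σ : Perm α, x ^ σ.numCycles := by
  -- `none` is either a new fixed point, or it is spliced into a cycle right before `some b`
  rw [← decomposeOption.symm.sum_comp, Fintype.sum_prod_type, Fintype.sum_option]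
  have hsome : ∀ (b : α) (σ : Perm α),
      numCycles (decomposeOption.symm (some b, σ)) = σ.numCycles := by
    intro b σ
    have := numCycles_swap_mul_of_apply_eq (g := σ.optionCongr) (y := some b) (by simp)
      (Option.some_ne_none b).symm
    rw [numCycles_optionCongr] at this
    simpa [decomposeOption_symm_apply] using this
  have hnone : ∀ σ : Perm α, numCycles (decomposeOption.symm (none, σ)) = σ.numCycles + 1 := by
    intro σ
    simp only [decomposeOption_symm_apply, swap_self, ← Perm.one_def, one_mul,
      numCycles_optionCongr]
  simp_rw [hsome, hnone, sum_const, card_univ, pow_succ, ← sum_mul, nsmul_eq_mul]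
  ring

theorem sum_X_pow_numCycles {R : Type*} [CommSemiring R] :
    ∑ σ : Perm α, (Polynomial.X : Polynomial R) ^ σ.numCycles =
      ascPochhammer R (Fintype.card α) := by
  suffices h : ∀ n, ∑ σ : Perm (Fin n), (Polynomial.X : Polynomial R) ^ σ.numCycles =
      ascPochhammer R n by
    rw [sum_pow_numCycles_congr (Fintype.equivFin α), h]
  intro n
  induction n with
  | zero => simp [numCycles]
  | succ n ih =>
    rw [sum_pow_numCycles_congr (finSuccEquiv n), sum_pow_numCycles_option, ih,
      ascPochhammer_succ_right, Fintype.card_fin, mul_comm]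

theorem sum_pow_numCycles_eq_sum_derangements (x : M) :
    ∑ σ : Perm α, x ^ σ.numCycles =
      ∑ S : Finset α,
        x ^ #S * ∑ τ : derangements {a // a ∉ S}, x ^ numCycles (τ : Perm {a // a ∉ S}) := by
  rw [← Fintype.sum_fiberwise fun σ : Perm α => univ.filter fun a => σ a = a]
  refine sum_congr rfl fun S _ => ?_
  let e : derangements {a // a ∉ S} ≃ {σ : Perm α // (univ.filter fun a => σ a = a) = S} :=
    (derangements.subtypeEquiv _).trans (subtypeEquivRight fun σ => by
      simp [Finset.ext_iff, Function.mem_fixedPoints, Function.IsFixedPt, iff_comm])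
  rw [mul_sum]
  refine (Fintype.sum_equiv e
    (fun τ : derangements {a // a ∉ S} => x ^ #S * x ^ numCycles (τ : Perm {a // a ∉ S}))
    (fun σ => x ^ numCycles (σ : Perm α)) fun τ => ?_).symm
  change _ = x ^ numCycles (ofSubtype (τ : Perm {a // a ∉ S}))
  rw [numCycles_ofSubtype, pow_add, mul_comm, Fintype.card_subtype]
  simp

end Sums

end Equiv.Perm

open Polynomial Equiv Perm

theorem permNumCycles_eq_numCycles {n : ℕ} (σ : Perm (Fin n)) :
    permNumCycles σ = σ.numCycles := by
  rw [permNumCycles, numCycles, sum_cycleType, Fintype.card_fin]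

theorem dPoly_eq_sum_derangements (n : ℕ) :
    dPoly n = ∑ τ : derangements (Fin n), X ^ numCycles (τ : Perm (Fin n)) := by
  rw [dPoly, sum_subtype (p := (· ∈ derangements (Fin n))) (F := inferInstance) _
    fun σ => by simp [derangements]]
  simp only [permNumCycles_eq_numCycles]

theorem ascPochhammer_eq_binomialTransform_dPoly (n : ℕ) :
    ascPochhammer ℚ n = binomialTransform X dPoly n := by
  have hderangements : ∀ S : Finset (Fin n),
      ∑ τ : derangements {a // a ∉ S}, X ^ numCycles (τ : Perm {a // a ∉ S}) =
        dPoly (n - #S) := fun S => by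
    rw [dPoly_eq_sum_derangements, sum_derangements_pow_numCycles_congr
      (Fintype.equivFinOfCardEq (n := n - #S) (by simp [Fintype.card_subtype_compl]))]
  calc ascPochhammer ℚ n = ∑ σ : Perm (Fin n), X ^ σ.numCycles := by
        rw [sum_X_pow_numCycles, Fintype.card_fin]
    _ = ∑ S : Finset (Fin n), X ^ #S * dPoly (n - #S) := by
        simp only [sum_pow_numCycles_eq_sum_derangements, hderangements]
    _ = binomialTransform X dPoly n := by
        rw [← powerset_univ, sum_powerset_apply_card (fun k => X ^ k * dPoly (n - k)), card_univ,
          Fintype.card_fin, binomialTransform]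
        simp only [nsmul_eq_mul, mul_assoc]

theorem genBinom_neg_X (k : ℕ) :
    genBinom (-X) k = ((-1 : ℚ) ^ k / k.factorial) • ascPochhammer ℚ k := by
  have hprod : ∏ j ∈ range k, (-X - (j : ℚ) • (1 : ℚ[X])) = (-1) ^ k * ascPochhammer ℚ k := by
    induction k with
    | zero => simp
    | succ k ih =>
      rw [prod_range_succ, ih, ascPochhammer_succ_right, pow_succ, Nat.cast_smul_eq_nsmul,
        nsmul_one]
      ring
  rw [genBinom, hprod, div_eq_inv_mul, mul_smul, Polynomial.smul_eq_C_mul ((-1 : ℚ) ^ k)]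
  simp

theorem factorial_smul_X_pow_mul_genBinom_neg_X {n i : ℕ} (hi : i ≤ n) :
    ((-1 : ℚ) ^ n * n.factorial) • ((i.factorial : ℚ)⁻¹ • (X ^ i * genBinom (-X) (n - i))) =
      (n.choose i : ℚ[X]) * (-X) ^ i * ascPochhammer ℚ (n - i) := by
  have hsign : (-1 : ℚ) ^ n = (-1) ^ i * (-1) ^ (n - i) := by
    rw [← pow_add, Nat.add_sub_cancel' hi]
  have hsq : ((-1 : ℚ) ^ (n - i)) ^ 2 = 1 := by
    rw [← pow_mul, mul_comm, pow_mul, neg_one_sq, one_pow]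
  have hscalar : (-1 : ℚ) ^ n * n.factorial * (i.factorial : ℚ)⁻¹ *
      ((-1) ^ (n - i) / (n - i).factorial) = n.choose i * (-1) ^ i := by
    rw [Nat.cast_choose ℚ hi, hsign]
    linear_combination (-1 : ℚ) ^ i * n.factorial * (i.factorial : ℚ)⁻¹ *
      ((n - i).factorial : ℚ)⁻¹ * hsq
  rw [genBinom_neg_X, mul_smul_comm, smul_smul, smul_smul, hscalar, Polynomial.smul_eq_C_mul,
    neg_pow]
  simp
  ring

/-- `d_n(β) = (-1)^n n! Σ_{i=0}^{n} (β^i/i!) C(-β, n-i)`. -/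
theorem derangement_closed_form (n : ℕ) :
    dPoly n = ((-1 : ℚ) ^ n * n.factorial) •
      ∑ i ∈ Finset.range (n + 1),
        (i.factorial : ℚ)⁻¹ • (Polynomial.X ^ i * genBinom (-Polynomial.X) (n - i)) := by
  have hinv : dPoly = binomialTransform (-X) (ascPochhammer ℚ ·) := by
    rw [funext ascPochhammer_eq_binomialTransform_dPoly, binomialTransform_neg_binomialTransform]
  rw [hinv, binomialTransform, smul_sum]
  exact sum_congr rfl fun i hi =>
    (factorial_smul_X_pow_mul_genBinom_neg_X (Nat.lt_succ_iff.mp (mem_range.mp hi))).symm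
end

section
/- (Genus zero Virasoro graph theorem) For each n ≥ 2, the rational function G_n^{(0)}(z_1,...,z_n) defined by the Zhu recursion equals the derangement sum Σ_{φ ∈ F_n} (C/2)^{K(φ)} Π_{i=1}^n (z_i - z_{φ(i)})^{-2}, where F_n is the set of derangements of {1,...,n} and K(φ) is the number of cycles of φ. -/
open Finset

/-- The genus zero Virasoro generating functions `G_n^{(0)}`, defined by Zhu's
recursion: `G_0 = 1`, `G_1 = 0`, and
`G_n(z_1,…,z_n) = Σ_{k=2}^n [(z_1-z_k)⁻¹ ∂_{z_k} + 2(z_1-z_k)⁻²] G_{n-1}(z_2,…,z_n)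
  + (C/2)(z_1-z_k)⁻⁴ G_{n-2}(z_2,…,ẑ_k,…,z_n)`. -/
noncomputable def G (Cc : ℂ) : (n : ℕ) → (Fin n → ℂ) → ℂ
  | 0, _ => 1
  | 1, _ => 0
  | n + 2, z =>
      ∑ k : Fin (n + 1),
        ((z 0 - z k.succ)⁻¹ *
            deriv (fun t => G Cc (n + 1)
              (Function.update (fun j : Fin (n + 1) => z j.succ) k t)) (z k.succ) +
          2 * ((z 0 - z k.succ) ^ 2)⁻¹ * G Cc (n + 1) (fun j : Fin (n + 1) => z j.succ) +
          Cc / 2 * ((z 0 - z k.succ) ^ 4)⁻¹ *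
            G Cc n (fun j : Fin n => z (k.succAbove j).succ))

/-
Write `D_n(z)` for the derangement sum. It satisfies Zhu's recursion, so `G_n = D_n` by
induction; the derivative term only sees `G_{n-1}` near an injective point, where it already
agrees with `D_{n-1}`.

For the recursion, sort the derangements `ψ` of `{0, …, n+1}` by `ψ 0 = k+1`. Either `(0 k+1)` is
a 2-cycle of `ψ`, and deleting it leaves a derangement of the other `n` points with one cycle
fewer: this is the `(C/2)(z_0 - z_{k+1})⁻⁴` term. Or deleting `0` from its cycle leaves a
derangement `σ` of `{1, …, n+1}` with as many cycles. Summed over `k`, these reproduce the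
derivative and double-pole terms applied to `σ`: the contributions of an edge `i → σ i` combine
through `u⁻² + v⁻² - 2 (u v)⁻¹ = (u⁻¹ - v⁻¹)²` into the weight of the path `i → 0 → σ i`.
-/

open Equiv Equiv.Perm Function

namespace Equiv.Perm

variable {α : Type*} [Fintype α] [DecidableEq α]

theorem card_cycleType_swap_mul_of_apply_apply_ne {f : Perm α} {x : α} (hx : f x ≠ x)
    (hffx : f (f x) ≠ x) :
    (swap x (f x) * f).cycleType.card = f.cycleType.card := by
  set c := f.cycleOf x
  have hc : c ∈ f.cycleFactorsFinset :=
    cycleOf_mem_cycleFactorsFinset_iff.mpr (mem_support.mpr hx)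
  have hcx : c x = f x := f.cycleOf_apply_self x
  have hccx : c (c x) ≠ x := by rwa [hcx, f.cycleOf_apply_apply_self]
  have hc_cycle : c.IsCycle := f.isCycle_cycleOf hx
  have hc'_cycle : (swap x (c x) * c).IsCycle := hc_cycle.swap_mul (hcx ▸ hx) hccx
  have hdisj : (f * c⁻¹).Disjoint c := disjoint_mul_inv_of_mem_cycleFactorsFinset hc
  have hdisj' : (swap x (c x) * c).Disjoint (f * c⁻¹) :=
    (hdisj.mono le_rfl (by rw [support_swap_mul_eq c x hccx]; exact sdiff_le)).symm
  have hf : f * c⁻¹ * c = f := inv_mul_cancel_right f c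
  have hsplit : swap x (f x) * f = (swap x (c x) * c) * (f * c⁻¹) := by
    conv_lhs => arg 2; rw [← hf, hdisj.commute.eq]
    rw [hcx, mul_assoc]
  have hcycleType : f.cycleType = (f * c⁻¹).cycleType + c.cycleType := by
    rw [← hdisj.cycleType_mul, hf]
  rw [hsplit, hdisj'.cycleType_mul, hcycleType, Multiset.card_add, Multiset.card_add,
    hc_cycle.cycleType, hc'_cycle.cycleType, add_comm]
  rfl

end Equiv.Perm

theorem permNumCycles_eq_card_cycleType {n : ℕ} {σ : Perm (Fin n)} (hσ : ∀ i, σ i ≠ i) :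
    permNumCycles σ = σ.cycleType.card := by
  have hsupp : σ.support = univ := by ext i; simp [hσ i]
  simp [permNumCycles, sum_cycleType, hsupp]

namespace Fin

def extendPermAt {n : ℕ} (p : Fin (n + 1)) (σ : Perm (Fin n)) : Perm (Fin (n + 1)) :=
  σ.extendDomain (finSuccAboveEquiv p)

variable {n : ℕ}

@[simp]
theorem extendPermAt_self (p : Fin (n + 1)) (σ : Perm (Fin n)) : extendPermAt p σ p = p :=
  extendDomain_apply_not_subtype _ _ (by simp)

@[simp]
theorem extendPermAt_succAbove (p : Fin (n + 1)) (σ : Perm (Fin n)) (j : Fin n) :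
    extendPermAt p σ (p.succAbove j) = p.succAbove (σ j) := by
  simpa [extendPermAt, finSuccAboveEquiv_apply] using
    extendDomain_apply_image σ (finSuccAboveEquiv p) j

theorem extendPermAt_zero_succ (σ : Perm (Fin n)) (j : Fin n) :
    extendPermAt 0 σ j.succ = (σ j).succ := by
  simpa using extendPermAt_succAbove 0 σ j

@[simp]
theorem cycleType_extendPermAt (p : Fin (n + 1)) (σ : Perm (Fin n)) :
    (extendPermAt p σ).cycleType = σ.cycleType :=
  cycleType_extendDomain _

theorem extendPermAt_injective (p : Fin (n + 1)) : Injective (extendPermAt (n := n) p) :=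
  extendDomainHom_injective _

theorem exists_extendPermAt_eq {p : Fin (n + 1)} {σ : Perm (Fin (n + 1))} (hσ : σ p = p) :
    ∃ ρ, extendPermAt p ρ = σ := by
  have hne : ∀ x, σ x ≠ p ↔ x ≠ p := fun x => σ.injective.ne_iff' hσ
  refine ⟨(finSuccAboveEquiv p).symm.permCongr (σ.subtypePerm hne), Equiv.ext fun x => ?_⟩
  rcases eq_or_ne x p with rfl | hx
  · simp [hσ]
  · obtain ⟨j, rfl⟩ := exists_succAbove_eq hx
    simp only [extendPermAt_succAbove, permCongr_apply, symm_symm, subtypePerm_apply]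
    exact congrArg Subtype.val ((finSuccAboveEquiv p).apply_symm_apply _)

theorem extendPermAt_apply_eq_or_ne_self (p : Fin (n + 1)) {ρ : Perm (Fin n)}
    (hρ : ∀ j, ρ j ≠ j) (i : Fin (n + 1)) : extendPermAt p ρ i = p ∨ extendPermAt p ρ i ≠ i := by
  cases i using p.succAboveCases with
  | x => exact Or.inl (extendPermAt_self p ρ)
  | p j => simpa using hρ j

end Fin

def derangementFinset (n : ℕ) : Finset (Perm (Fin n)) :=
  univ.filter fun σ => ∀ i, σ i ≠ i

theorem mem_derangementFinset {n : ℕ} {σ : Perm (Fin n)} :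
    σ ∈ derangementFinset n ↔ ∀ i, σ i ≠ i := by
  simp [derangementFinset]

section InsertZero

variable {n : ℕ}

/-- Insert `0` into the cycle of `σ` (acting on the `succ`s) just before `k.succ`. -/
def insertZeroBefore (k : Fin (n + 1)) (σ : Perm (Fin (n + 1))) : Perm (Fin (n + 2)) :=
  decomposeFin.symm (k.succ, σ)

@[simp]
theorem insertZeroBefore_zero (k : Fin (n + 1)) (σ : Perm (Fin (n + 1))) :
    insertZeroBefore k σ 0 = k.succ := by
  simp [insertZeroBefore]

theorem insertZeroBefore_succ (k : Fin (n + 1)) (σ : Perm (Fin (n + 1))) (i : Fin (n + 1)) :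
    insertZeroBefore k σ i.succ = if σ i = k then 0 else (σ i).succ := by
  rw [insertZeroBefore, decomposeFin_symm_apply_succ]
  split_ifs with h
  · simp [h]
  · exact swap_apply_of_ne_of_ne (Fin.succ_ne_zero _) (by simpa using h)

theorem insertZeroBefore_eq_swap_mul (k : Fin (n + 1)) (σ : Perm (Fin (n + 1))) :
    insertZeroBefore k σ = swap 0 k.succ * Fin.extendPermAt 0 σ := by
  ext i
  cases i using Fin.cases <;> simp [insertZeroBefore, Fin.extendPermAt_zero_succ]

theorem insertZeroBefore_apply_ne_self_iff (k : Fin (n + 1)) (σ : Perm (Fin (n + 1))) :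
    (∀ i, insertZeroBefore k σ i ≠ i) ↔ ∀ i, σ i = k ∨ σ i ≠ i := by
  rw [Fin.forall_fin_succ, insertZeroBefore_zero, and_iff_right (Fin.succ_ne_zero k)]
  refine forall_congr' fun i => ?_
  rw [insertZeroBefore_succ]
  split_ifs with h <;> simp [h, (Fin.succ_ne_zero i).symm]

theorem card_cycleType_insertZeroBefore {k : Fin (n + 1)} {σ : Perm (Fin (n + 1))}
    (hk : σ k ≠ k) : (insertZeroBefore k σ).cycleType.card = σ.cycleType.card := by
  set ψ := insertZeroBefore k σ
  have hψ0 : ψ 0 ≠ 0 := by simp [ψ, Fin.succ_ne_zero]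
  have hψψ0 : ψ (ψ 0) ≠ 0 := by simp [ψ, insertZeroBefore_succ, hk, Fin.succ_ne_zero]
  rw [← card_cycleType_swap_mul_of_apply_apply_ne hψ0 hψψ0]
  simp [ψ, insertZeroBefore_eq_swap_mul, ← mul_assoc]

theorem card_cycleType_insertZeroBefore_extendPermAt (k : Fin (n + 1)) (ρ : Perm (Fin n)) :
    (insertZeroBefore k (Fin.extendPermAt k ρ)).cycleType.card = ρ.cycleType.card + 1 := by
  have hdisj : (swap 0 k.succ).Disjoint (Fin.extendPermAt 0 (Fin.extendPermAt k ρ)) := by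
    intro y
    rcases eq_or_ne y 0 with rfl | h0
    · exact Or.inr (Fin.extendPermAt_self 0 _)
    rcases eq_or_ne y k.succ with rfl | hk
    · simp [Fin.extendPermAt_zero_succ]
    · exact Or.inl (swap_apply_of_ne_of_ne h0 hk)
  rw [insertZeroBefore_eq_swap_mul, hdisj.cycleType_mul, Multiset.card_add,
    (isCycle_swap (Fin.succ_ne_zero k).symm).cycleType]
  simp [add_comm]

theorem permNumCycles_insertZeroBefore {k : Fin (n + 1)} {σ : Perm (Fin (n + 1))}
    (hσ : ∀ i, σ i ≠ i) : permNumCycles (insertZeroBefore k σ) = permNumCycles σ := by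
  rw [permNumCycles_eq_card_cycleType hσ, permNumCycles_eq_card_cycleType,
    card_cycleType_insertZeroBefore (hσ k)]
  exact (insertZeroBefore_apply_ne_self_iff k σ).mpr fun i => Or.inr (hσ i)

theorem insertZeroBefore_extendPermAt_apply_ne_self (k : Fin (n + 1)) {ρ : Perm (Fin n)}
    (hρ : ∀ j, ρ j ≠ j) (i : Fin (n + 2)) : insertZeroBefore k (Fin.extendPermAt k ρ) i ≠ i :=
  (insertZeroBefore_apply_ne_self_iff k _).mpr (Fin.extendPermAt_apply_eq_or_ne_self k hρ) i

theorem permNumCycles_insertZeroBefore_extendPermAt (k : Fin (n + 1)) {ρ : Perm (Fin n)}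
    (hρ : ∀ j, ρ j ≠ j) :
    permNumCycles (insertZeroBefore k (Fin.extendPermAt k ρ)) = permNumCycles ρ + 1 := by
  rw [permNumCycles_eq_card_cycleType hρ,
    permNumCycles_eq_card_cycleType (insertZeroBefore_extendPermAt_apply_ne_self k hρ),
    card_cycleType_insertZeroBefore_extendPermAt]

theorem image_extendPermAt_derangementFinset (k : Fin (n + 1)) :
    (derangementFinset n).image (Fin.extendPermAt k) =
      univ.filter fun σ : Perm (Fin (n + 1)) => (∀ i, σ i = k ∨ σ i ≠ i) ∧ σ k = k := by
  ext σ
  simp only [mem_image, mem_derangementFinset, mem_filter, mem_univ, true_and]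
  constructor
  · rintro ⟨ρ, hρ, rfl⟩
    exact ⟨Fin.extendPermAt_apply_eq_or_ne_self k hρ, Fin.extendPermAt_self k ρ⟩
  · rintro ⟨hσ, hσk⟩
    obtain ⟨ρ, rfl⟩ := Fin.exists_extendPermAt_eq hσk
    refine ⟨ρ, fun j => ?_, rfl⟩
    simpa using hσ (k.succAbove j)

theorem sum_derangementFinset_succ_succ {M : Type*} [AddCommMonoid M]
    (f : Perm (Fin (n + 2)) → M) :
    ∑ ψ ∈ derangementFinset (n + 2), f ψ =
      ∑ k : Fin (n + 1), (∑ σ ∈ derangementFinset (n + 1), f (insertZeroBefore k σ) +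
        ∑ ρ ∈ derangementFinset n, f (insertZeroBefore k (Fin.extendPermAt k ρ))) := by
  rw [derangementFinset, sum_filter, ← (decomposeFin.symm).sum_comp, Fintype.sum_prod_type,
    Fin.sum_univ_succ, sum_eq_zero (fun σ _ => if_neg fun h => h 0 (by simp)), zero_add]
  refine sum_congr rfl fun k _ => ?_
  simp only [← insertZeroBefore.eq_def, insertZeroBefore_apply_ne_self_iff]
  rw [← sum_filter, ← sum_filter_not_add_sum_filter _ (fun σ => σ k = k), filter_filter,
    filter_filter, ← image_extendPermAt_derangementFinset,
    sum_image fun _ _ _ _ h => Fin.extendPermAt_injective k h]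
  congr 1
  refine sum_congr (ext fun σ => ?_) fun _ _ => rfl
  simp only [mem_filter, mem_univ, true_and, mem_derangementFinset]
  refine ⟨fun ⟨h, hk⟩ i hi => ?_, fun h => ⟨fun i => Or.inr (h i), h k⟩⟩
  rcases h i with hik | hne
  · obtain rfl : i = k := hi.symm.trans hik
    exact hk hi
  · exact hne hi

end InsertZero

noncomputable def edgeProd {ι : Type*} [Fintype ι] (z : ι → ℂ) (φ : ι → ι) : ℂ :=
  ∏ i, ((z i - z (φ i)) ^ 2)⁻¹

theorem hasDerivAt_edgeProd_update {ι : Type*} [Fintype ι] [DecidableEq ι] {w : ι → ℂ}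
    {φ : ι → ι} (hw : ∀ i, w i ≠ w (φ i)) (k : ι) :
    HasDerivAt (fun t => edgeProd (update w k t) φ)
      (edgeProd w φ * ∑ i, 2 * ((if φ i = k then 1 else 0) - (if i = k then 1 else 0)) /
        (w i - w (φ i))) (w k) := by
  have hfactor : ∀ i, HasDerivAt (fun t => ((update w k t i - update w k t (φ i)) ^ 2)⁻¹)
      (((w i - w (φ i)) ^ 2)⁻¹ * (2 * ((if φ i = k then 1 else 0) - (if i = k then 1 else 0)) /
        (w i - w (φ i)))) (w k) := by
    intro i
    have hupdate := hasDerivAt_pi.mp (hasDerivAt_update w k (w k))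
    have hne : w i - w (φ i) ≠ 0 := sub_ne_zero.mpr (hw i)
    have hd := (((hupdate i).fun_sub (hupdate (φ i))).fun_pow 2).fun_inv (by simpa using hne)
    simp only [Pi.single_apply, update_eq_self] at hd
    refine hd.congr_deriv ?_
    field_simp
    ring
  have hprod := HasDerivAt.fun_finsetProd (u := univ) fun i _ => hfactor i
  simp only [update_eq_self, smul_eq_mul] at hprod
  refine hprod.congr_deriv ?_
  rw [mul_sum]
  refine sum_congr rfl fun i _ => ?_
  rw [edgeProd, ← mul_prod_erase univ _ (mem_univ i)]
  ring

section EdgeInsertion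

variable {n : ℕ} (z : Fin (n + 2) → ℂ)

theorem edgeProd_insertZeroBefore_apply_mul (σ : Perm (Fin (n + 1))) (a : Fin (n + 1)) :
    edgeProd z (insertZeroBefore (σ a) σ) * ((z a.succ - z (σ a).succ) ^ 2)⁻¹ =
      ((z 0 - z (σ a).succ) ^ 2)⁻¹ * ((z a.succ - z 0) ^ 2)⁻¹ *
        edgeProd (fun i => z i.succ) σ := by
  have hrest : ∀ i ∈ univ.erase a, insertZeroBefore (σ a) σ i.succ = (σ i).succ := fun i hi => by
    rw [insertZeroBefore_succ, if_neg (σ.injective.ne (ne_of_mem_erase hi))]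
  rw [edgeProd, edgeProd, Fin.prod_univ_succ, ← mul_prod_erase univ _ (mem_univ a),
    ← mul_prod_erase univ _ (mem_univ a), prod_congr rfl fun i hi => by rw [hrest i hi],
    insertZeroBefore_zero, insertZeroBefore_succ, if_pos rfl]
  ring

theorem edgeProd_insertZeroBefore_extendPermAt (k : Fin (n + 1)) (ρ : Perm (Fin n)) :
    edgeProd z (insertZeroBefore k (Fin.extendPermAt k ρ)) =
      ((z 0 - z k.succ) ^ 4)⁻¹ * edgeProd (fun j => z (k.succAbove j).succ) ρ := by
  rw [edgeProd, edgeProd, Fin.prod_univ_succ, Fin.prod_univ_succAbove _ k]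
  simp only [insertZeroBefore_zero, insertZeroBefore_succ, Fin.extendPermAt_self,
    Fin.extendPermAt_succAbove, if_true, Fin.succAbove_ne, if_false]
  rw [show (z k.succ - z 0) ^ 2 = (z 0 - z k.succ) ^ 2 by ring, ← mul_assoc, ← mul_inv,
    ← pow_add]

end EdgeInsertion

theorem inv_sq_add_inv_sq_add_two_mul_div (x a b : ℂ) (ha : x ≠ a) (hb : x ≠ b) (hab : a ≠ b) :
    ((x - a) ^ 2)⁻¹ + ((x - b) ^ 2)⁻¹ + 2 * ((x - b)⁻¹ - (x - a)⁻¹) / (a - b) =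
      ((x - b) ^ 2)⁻¹ * ((a - x) ^ 2)⁻¹ * (a - b) ^ 2 := by
  have ha' : x - a ≠ 0 := sub_ne_zero.mpr ha
  have hb' : x - b ≠ 0 := sub_ne_zero.mpr hb
  have hab' : a - b ≠ 0 := sub_ne_zero.mpr hab
  have ha'' : a - x ≠ 0 := sub_ne_zero.mpr ha.symm
  field_simp
  ring

theorem sum_edgeProd_insertZeroBefore {n : ℕ} {z : Fin (n + 2) → ℂ} (hz : Injective z)
    {σ : Perm (Fin (n + 1))} (hσ : ∀ i, σ i ≠ i) :
    ∑ k : Fin (n + 1), ((z 0 - z k.succ)⁻¹ * (edgeProd (fun i => z i.succ) σ *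
        ∑ i, 2 * ((if σ i = k then 1 else 0) - (if i = k then 1 else 0)) /
          (z i.succ - z (σ i).succ)) +
        2 * ((z 0 - z k.succ) ^ 2)⁻¹ * edgeProd (fun i => z i.succ) σ) =
      ∑ k, edgeProd z (insertZeroBefore k σ) := by
  set P := edgeProd (fun i => z i.succ) σ
  have hderiv_term : ∑ k : Fin (n + 1), (z 0 - z k.succ)⁻¹ * (P *
      ∑ i, 2 * ((if σ i = k then 1 else 0) - (if i = k then 1 else 0)) /
        (z i.succ - z (σ i).succ)) =
      P * ∑ i, 2 * ((z 0 - z (σ i).succ)⁻¹ - (z 0 - z i.succ)⁻¹) / (z i.succ - z (σ i).succ) := by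
    simp only [mul_sum]
    rw [sum_comm]
    refine sum_congr rfl fun i _ => ?_
    simp only [mul_sub, sub_div, mul_div_assoc, mul_ite, mul_one, mul_zero, ite_div, zero_div,
      sum_sub_distrib, sum_ite_eq, mem_univ, if_true]
    ring
  have hpole_term : ∑ k : Fin (n + 1), 2 * ((z 0 - z k.succ) ^ 2)⁻¹ * P =
      P * ∑ i, (((z 0 - z i.succ) ^ 2)⁻¹ + ((z 0 - z (σ i).succ) ^ 2)⁻¹) := by
    rw [sum_add_distrib, Equiv.sum_comp σ (fun k => ((z 0 - z k.succ) ^ 2)⁻¹), ← two_mul,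
      mul_sum, mul_sum]
    exact sum_congr rfl fun k _ => by ring
  rw [sum_add_distrib, hderiv_term, hpole_term, ← mul_add, ← sum_add_distrib,
    ← Equiv.sum_comp σ (fun k => edgeProd z (insertZeroBefore k σ)), mul_sum]
  refine sum_congr rfl fun i _ => ?_
  have hsucc : ∀ {a b : Fin (n + 1)}, a ≠ b → z a.succ ≠ z b.succ :=
    fun h => hz.ne (Fin.succ_injective _ |>.ne h)
  have hx : ∀ a : Fin (n + 1), z 0 ≠ z a.succ := fun a => hz.ne (Fin.succ_ne_zero a).symm
  have hedge : z i.succ - z (σ i).succ ≠ 0 := sub_ne_zero.mpr (hsucc (hσ i).symm)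
  rw [add_comm, inv_sq_add_inv_sq_add_two_mul_div _ _ _ (hx i) (hx (σ i)) (hsucc (hσ i).symm),
    ← mul_inv_cancel_right₀ (inv_ne_zero (pow_ne_zero 2 hedge)) (edgeProd z _),
    edgeProd_insertZeroBefore_apply_mul, inv_inv]
  ring

noncomputable def derangementSum (Cc : ℂ) (n : ℕ) (z : Fin n → ℂ) : ℂ :=
  ∑ φ ∈ derangementFinset n, (Cc / 2) ^ permNumCycles φ * edgeProd z φ

theorem derangementSum_zero (Cc : ℂ) (z : Fin 0 → ℂ) : derangementSum Cc 0 z = 1 := by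
  simp [derangementSum, derangementFinset, edgeProd, permNumCycles, univ_unique]

theorem derangementSum_one (Cc : ℂ) (z : Fin 1 → ℂ) : derangementSum Cc 1 z = 0 :=
  sum_eq_zero fun _ hσ => absurd (Subsingleton.elim _ _) (mem_derangementFinset.mp hσ 0)

theorem hasDerivAt_derangementSum_update (Cc : ℂ) {n : ℕ} {w : Fin n → ℂ} (hw : Injective w)
    (k : Fin n) :
    HasDerivAt (fun t => derangementSum Cc n (update w k t))
      (∑ φ ∈ derangementFinset n, (Cc / 2) ^ permNumCycles φ * (edgeProd w φ *
        ∑ i, 2 * ((if φ i = k then 1 else 0) - (if i = k then 1 else 0)) / (w i - w (φ i))))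
      (w k) :=
  .fun_sum fun _ hφ => .const_mul _ <|
    hasDerivAt_edgeProd_update (fun i => hw.ne (mem_derangementFinset.mp hφ i).symm) k

theorem derangementSum_succ_succ (Cc : ℂ) {n : ℕ} {z : Fin (n + 2) → ℂ} (hz : Injective z) :
    derangementSum Cc (n + 2) z = ∑ k : Fin (n + 1),
      ((z 0 - z k.succ)⁻¹ *
          deriv (fun t => derangementSum Cc (n + 1)
            (update (fun j : Fin (n + 1) => z j.succ) k t)) (z k.succ) +
        2 * ((z 0 - z k.succ) ^ 2)⁻¹ * derangementSum Cc (n + 1) (fun j => z j.succ) +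
        Cc / 2 * ((z 0 - z k.succ) ^ 4)⁻¹ *
          derangementSum Cc n (fun j : Fin n => z (k.succAbove j).succ)) := by
  have hw : Injective fun j : Fin (n + 1) => z j.succ := hz.comp (Fin.succ_injective _)
  simp only [(hasDerivAt_derangementSum_update Cc hw _).deriv]
  rw [derangementSum, sum_derangementFinset_succ_succ, sum_add_distrib, sum_add_distrib]
  congr 1
  · conv_rhs => enter [2, k]; rw [derangementSum, mul_sum, mul_sum, ← sum_add_distrib]
    rw [sum_comm]
    conv_rhs => rw [sum_comm]
    refine sum_congr rfl fun σ hσ => ?_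
    have hσ' := mem_derangementFinset.mp hσ
    simp only [permNumCycles_insertZeroBefore hσ']
    rw [← mul_sum, ← sum_edgeProd_insertZeroBefore hz hσ', mul_sum]
    exact sum_congr rfl fun k _ => by ring
  · refine sum_congr rfl fun k _ => ?_
    rw [derangementSum, mul_sum]
    refine sum_congr rfl fun ρ hρ => ?_
    rw [permNumCycles_insertZeroBefore_extendPermAt k (mem_derangementFinset.mp hρ),
      edgeProd_insertZeroBefore_extendPermAt, pow_succ]
    ring

theorem Function.Injective.update_of_forall_ne {ι α : Type*} [DecidableEq ι] {w : ι → α}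
    (hw : Injective w) {k : ι} {t : α} (ht : ∀ j, j ≠ k → t ≠ w j) :
    Injective (update w k t) := by
  intro x y hxy
  simp only [update_apply] at hxy
  split_ifs at hxy with hx hy hy
  · exact hx.trans hy.symm
  · exact absurd hxy (ht y hy)
  · exact absurd hxy.symm (ht x hx)
  · exact hw hxy

theorem eventually_injective_update {ι α : Type*} [Finite ι] [DecidableEq ι] [TopologicalSpace α]
    [T1Space α] {w : ι → α} (hw : Injective w) (k : ι) :
    ∀ᶠ t in nhds (w k), Injective (update w k t) := by
  refine (Filter.eventually_all.mpr fun j => ?_).mono fun t ht => hw.update_of_forall_ne ht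
  rcases eq_or_ne j k with rfl | hj
  · exact .of_forall fun _ h => (h rfl).elim
  · exact (eventually_ne_nhds (hw.ne hj.symm)).mono fun _ ht _ => ht

theorem G_eq_derangement_sum_general (Cc : ℂ) (n : ℕ)
    (z : Fin n → ℂ) (hz : Function.Injective z) :
    G Cc n z =
      ∑ φ ∈ Finset.univ.filter (fun φ : Equiv.Perm (Fin n) => ∀ i, φ i ≠ i),
        (Cc / 2) ^ permNumCycles φ * ∏ i, ((z i - z (φ i)) ^ 2)⁻¹ := by
  induction n using Nat.strong_induction_on with | _ n ih =>
  have ih' : ∀ m < n, ∀ z : Fin m → ℂ, Injective z → G Cc m z = derangementSum Cc m z := ih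
  change G Cc n z = derangementSum Cc n z
  rcases n with _ | _ | n
  · exact (derangementSum_zero Cc z).symm
  · exact (derangementSum_one Cc z).symm
  have hw : Injective fun j : Fin (n + 1) => z j.succ := hz.comp (Fin.succ_injective _)
  rw [G, derangementSum_succ_succ Cc hz]
  refine sum_congr rfl fun k _ => ?_
  have hderiv : (fun t => G Cc (n + 1) (update (fun j => z j.succ) k t)) =ᶠ[nhds (z k.succ)]
      fun t => derangementSum Cc (n + 1) (update (fun j => z j.succ) k t) :=
    (eventually_injective_update hw k).mono fun t ht => ih' (n + 1) (by omega) _ ht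
  rw [hderiv.deriv_eq, ih' (n + 1) (by omega) _ hw,
    ih' n (by omega) (fun j => z (k.succAbove j).succ) (hw.comp Fin.succAbove_right_injective)]

/-- for `n ≥ 2` and pairwise distinct `z_i`,
`G_n^{(0)}(z_1,…,z_n) = Σ_{φ ∈ F_n} (C/2)^{K(φ)} Π_i (z_i - z_{φ(i)})^{-2}`,
summing over derangements `φ`. -/
theorem G_eq_derangement_sum (Cc : ℂ) (n : ℕ) (hn : 2 ≤ n)
    (z : Fin n → ℂ) (hz : Function.Injective z) :
    G Cc n z =
      ∑ φ ∈ Finset.univ.filter (fun φ : Equiv.Perm (Fin n) => ∀ i, φ i ≠ i),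
        (Cc / 2) ^ permNumCycles φ * ∏ i, ((z i - z (φ i)) ^ 2)⁻¹ :=
  G_eq_derangement_sum_general Cc n z hz
end

section
/- The partial permutation counting polynomials satisfy the recursion p_{n+1}(α,β) = (2n + α + β) p_n(α,β) - n(n + β - 1) p_{n-1}(α,β), with p_{-1}(α,β) = 0 and p_0(α,β) = 1. -/
open Finset PowerSeries

/-- One step of a partial map `f`, extended to `Option`. -/
def optStep {n : ℕ} (f : Fin n → Option (Fin n)) : Option (Fin n) → Option (Fin n)
  | none => none
  | some i => f i

/-- `i` lies on a cycle of the functional graph of `f`. -/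
def isCyclic {n : ℕ} (f : Fin n → Option (Fin n)) (i : Fin n) : Prop :=
  ∃ k : ℕ, 0 < k ∧ (optStep f)^[k] (some i) = some i

/-- The number of cycles of the functional graph of a partial permutation `f`:
each cycle is counted by its minimal element. -/
noncomputable def numCyclesPP {n : ℕ} (f : Fin n → Option (Fin n)) : ℕ :=
  Nat.card {i : Fin n // isCyclic f i ∧
    ∀ j : Fin n, (∃ k : ℕ, (optStep f)^[k] (some i) = some j) → i ≤ j}

/-- The number of necklaces (maximal directed paths, including isolated points) of
the functional graph of a partial permutation `f`: each necklace is counted by its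
unique end vertex of outdegree 0. -/
noncomputable def numNecklacesPP {n : ℕ} (f : Fin n → Option (Fin n)) : ℕ :=
  Nat.card {i : Fin n // f i = none}

/-- `f` is a partial permutation: injective where defined. -/
def IsPartialPerm {n : ℕ} (f : Fin n → Option (Fin n)) : Prop :=
  ∀ i j a, f i = some a → f j = some a → i = j

open scoped Classical in
/-- `p_n(α,β) = Σ_ψ α^{N(ψ)} β^{K(ψ)}` over partial permutations `ψ` of `{1,…,n}`,
with `α = X 0` and `β = X 1`. -/
noncomputable def pPoly (n : ℕ) : MvPolynomial (Fin 2) ℚ :=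
  ∑ f : Fin n → Option (Fin n),
    if IsPartialPerm f then
      MvPolynomial.X 0 ^ numNecklacesPP f * MvPolynomial.X 1 ^ numCyclesPP f
    else 0

/-! Removing the top point `n + 1` from a partial permutation `ψ` of `{1, …, n + 1}` and joining
its predecessor to its successor ("splicing") leaves a partial permutation `φ` of `{1, …, n}` with
the same cycles, except a fixed point at `n + 1`, and the same necklaces, except an isolated
`n + 1`. Conversely, `n + 1` can be put back into `φ` in exactly `n + N(φ) + 2` ways: in front of
one of the `n` points, at the end of one of the `N(φ)` necklaces, as a new necklace (weight `α`)
or as a new fixed point (weight `β`). Hence `p_{n+1} = (n + α + β + α ∂_α) p_n`. Since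
`[α ∂_α, α] = α`, induction turns this into `α ∂_α p_{n+1} = (n+1) p_{n+1} - (n+1)(n+β) p_n`, and
substituting back gives the recursion. -/

lemma exists_option_eq_some_iff {ι : Type*} {P : ι → Prop} (hP : ∀ x y, P x → P y → x = y) :
    ∃ o : Option ι, ∀ x, o = some x ↔ P x := by
  by_cases h : ∃ x, P x
  · obtain ⟨x, hx⟩ := h
    exact ⟨some x, fun y => ⟨by rintro ⟨⟩; exact hx, fun hy => congrArg some (hP x y hx hy)⟩⟩
  · exact ⟨none, fun x => by simpa using fun hx => h ⟨x, hx⟩⟩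

namespace MvPolynomial

lemma smul_pderiv_X_pow_mul_X_pow {σ R : Type*} [CommSemiring R] {i j : σ} (hij : i ≠ j)
    (N K : ℕ) :
    ((X i : MvPolynomial σ R) • pderiv i : Derivation R (MvPolynomial σ R) (MvPolynomial σ R))
      (X i ^ N * X j ^ K) = (N : MvPolynomial σ R) * (X i ^ N * X j ^ K) := by
  rcases N with _ | N
  · simp [Derivation.leibniz_pow, Derivation.smul_apply, pderiv_X_of_ne hij.symm]
  · simp [Derivation.leibniz, Derivation.leibniz_pow, Derivation.smul_apply,
      pderiv_X_of_ne hij.symm]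
    ring

end MvPolynomial

namespace PartialPerm

open MvPolynomial

variable {n m : ℕ}

@[simp] lemma optStep_some (f : Fin n → Option (Fin n)) (i : Fin n) : optStep f (some i) = f i :=
  rfl

@[simp] lemma iterate_optStep_none (f : Fin n → Option (Fin n)) (k : ℕ) :
    (optStep f)^[k] none = none :=
  Function.iterate_fixed rfl k

lemma iterate_succ_optStep_eq_some {f : Fin n → Option (Fin n)} {k : ℕ} {i j : Fin n} :
    (optStep f)^[k + 1] (some i) = some j ↔
      ∃ i₁, f i = some i₁ ∧ (optStep f)^[k] (some i₁) = some j := by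
  rw [Function.iterate_succ_apply, optStep_some]
  cases f i <;> simp

def Reaches (f : Fin n → Option (Fin n)) (i j : Fin n) : Prop :=
  ∃ k, (optStep f)^[k] (some i) = some j

def IsCycleMin (f : Fin n → Option (Fin n)) (i : Fin n) : Prop :=
  isCyclic f i ∧ ∀ j, Reaches f i j → i ≤ j

open scoped Classical in
lemma numCyclesPP_eq_sum (f : Fin n → Option (Fin n)) :
    numCyclesPP f = ∑ i, if IsCycleMin f i then 1 else 0 := by
  rw [numCyclesPP, Nat.card_eq_fintype_card, Fintype.card_subtype, Finset.card_filter]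
  exact Finset.sum_congr rfl fun i _ => if_congr Iff.rfl rfl rfl

lemma numNecklacesPP_eq_sum (f : Fin n → Option (Fin n)) :
    numNecklacesPP f = ∑ i, if f i = none then 1 else 0 := by
  rw [numNecklacesPP, Nat.card_eq_fintype_card, Fintype.card_subtype, Finset.card_filter]

def lower (o : Option (Fin (m + 1))) : Option (Fin m) := o.bind finSuccEquivLast

lemma lower_eq_some {o : Option (Fin (m + 1))} {x : Fin m} :
    lower o = some x ↔ o = some x.castSucc := by
  simp [lower, Option.bind_eq_some_iff, ← Equiv.eq_symm_apply, finSuccEquivLast_symm_some]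

lemma lower_eq_none {o : Option (Fin (m + 1))} :
    lower o = none ↔ o = none ∨ o = some (Fin.last m) := by
  rcases o with _ | y
  · simp [lower]
  · rcases Fin.eq_castSucc_or_eq_last y with ⟨x, rfl⟩ | rfl <;>
      simp [lower, finSuccEquivLast_castSucc, finSuccEquivLast_last, Fin.castSucc_ne_last]

@[simp] lemma lower_none : lower (none : Option (Fin (m + 1))) = none :=
  rfl

@[simp] lemma lower_some_last : lower (some (Fin.last m)) = none :=
  lower_eq_none.mpr (Or.inr rfl)

@[simp] lemma lower_map_castSucc (o : Option (Fin m)) : lower (o.map Fin.castSucc) = o := by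
  simp [lower, Option.bind_map, finSuccEquivLast_castSucc]

@[simp] lemma lower_some_castSucc (x : Fin m) : lower (some x.castSucc) = some x :=
  lower_map_castSucc (some x)

lemma map_castSucc_lower {o : Option (Fin (m + 1))} (h : o ≠ some (Fin.last m)) :
    (lower o).map Fin.castSucc = o := by
  rcases o with _ | y
  · rfl
  · obtain ⟨x, rfl⟩ := Fin.exists_castSucc_eq.mpr (by simpa using h)
    simp

def splice (F : Fin (m + 1) → Option (Fin (m + 1))) : Fin m → Option (Fin m) := fun i =>
  lower (if F i.castSucc = some (Fin.last m) then F (Fin.last m) else F i.castSucc)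

section Splice

variable {F : Fin (m + 1) → Option (Fin (m + 1))}

lemma splice_eq_some {i i₁ : Fin m} :
    splice F i = some i₁ ↔ F i.castSucc = some i₁.castSucc ∨
      (F i.castSucc = some (Fin.last m) ∧ F (Fin.last m) = some i₁.castSucc) := by
  unfold splice
  split_ifs with h
  · simp [lower_eq_some, h, (Fin.castSucc_ne_last i₁).symm]
  · simp [lower_eq_some, h]

lemma isPartialPerm_splice (hF : IsPartialPerm F) : IsPartialPerm (splice F) := by
  intro i j a hi hj
  rcases splice_eq_some.mp hi with hi | ⟨hi, hi'⟩ <;>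
    rcases splice_eq_some.mp hj with hj | ⟨hj, hj'⟩
  · exact Fin.castSucc_inj.mp (hF _ _ _ hi hj)
  · exact absurd (hF _ _ _ hi hj') (Fin.castSucc_ne_last i)
  · exact absurd (hF _ _ _ hj hi') (Fin.castSucc_ne_last j)
  · exact Fin.castSucc_inj.mp (hF _ _ _ hi hj)

lemma exists_iterate_of_iterate_splice {k : ℕ} {i j : Fin m}
    (h : (optStep (splice F))^[k] (some i) = some j) :
    ∃ k' ≥ k, (optStep F)^[k'] (some i.castSucc) = some j.castSucc := by
  induction k generalizing i with
  | zero => exact ⟨0, le_rfl, by simp_all⟩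
  | succ k ih =>
    obtain ⟨i₁, hi₁, hk⟩ := iterate_succ_optStep_eq_some.mp h
    obtain ⟨k', hk', hF⟩ := ih hk
    rcases splice_eq_some.mp hi₁ with h₁ | ⟨h₁, h₂⟩
    · exact ⟨k' + 1, by omega, iterate_succ_optStep_eq_some.mpr ⟨_, h₁, hF⟩⟩
    · refine ⟨k' + 2, by omega, iterate_succ_optStep_eq_some.mpr ⟨_, h₁, ?_⟩⟩
      exact iterate_succ_optStep_eq_some.mpr ⟨_, h₂, hF⟩

/-- A path of `F` visits the top point at most once in a row: once the top point has a
predecessor, injectivity forbids it to be a fixed point. -/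
lemma exists_iterate_splice_of_iterate (hF : IsPartialPerm F) {k' : ℕ} {i j : Fin m}
    (h : (optStep F)^[k'] (some i.castSucc) = some j.castSucc) :
    ∃ k ≤ k', (k = 0 → k' = 0) ∧ (optStep (splice F))^[k] (some i) = some j := by
  induction k' using Nat.strong_induction_on generalizing i with
  | _ k' ih =>
  rcases k' with _ | k'
  · exact ⟨0, le_rfl, fun _ => rfl, by simpa using h⟩
  obtain ⟨x, hx, hk'⟩ := iterate_succ_optStep_eq_some.mp h
  rcases Fin.eq_castSucc_or_eq_last x with ⟨x, rfl⟩ | rfl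
  · obtain ⟨k, hk, -, hx'⟩ := ih k' (by omega) hk'
    refine ⟨k + 1, by omega, by omega, iterate_succ_optStep_eq_some.mpr ⟨x, ?_, hx'⟩⟩
    exact splice_eq_some.mpr (Or.inl hx)
  rcases k' with _ | k'
  · exact absurd (by simpa using hk') (Fin.castSucc_ne_last j).symm
  obtain ⟨y, hy, hk'⟩ := iterate_succ_optStep_eq_some.mp hk'
  rcases Fin.eq_castSucc_or_eq_last y with ⟨y, rfl⟩ | rfl
  · obtain ⟨k, hk, -, hy'⟩ := ih k' (by omega) hk'
    refine ⟨k + 1, by omega, by omega, iterate_succ_optStep_eq_some.mpr ⟨y, ?_, hy'⟩⟩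
    exact splice_eq_some.mpr (Or.inr ⟨hx, hy⟩)
  · exact absurd (hF _ _ _ hx hy) (Fin.castSucc_ne_last i)

lemma isCyclic_splice_iff (hF : IsPartialPerm F) (i : Fin m) :
    isCyclic (splice F) i ↔ isCyclic F i.castSucc := by
  constructor
  · rintro ⟨k, hk, h⟩
    obtain ⟨k', hk', h'⟩ := exists_iterate_of_iterate_splice h
    exact ⟨k', by omega, h'⟩
  · rintro ⟨k', hk', h'⟩
    obtain ⟨k, -, hk, h⟩ := exists_iterate_splice_of_iterate hF h'
    exact ⟨k, by omega, h⟩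

lemma reaches_splice_iff (hF : IsPartialPerm F) (i j : Fin m) :
    Reaches (splice F) i j ↔ Reaches F i.castSucc j.castSucc := by
  constructor
  · rintro ⟨k, h⟩
    obtain ⟨k', -, h'⟩ := exists_iterate_of_iterate_splice h
    exact ⟨k', h'⟩
  · rintro ⟨k', h'⟩
    obtain ⟨k, -, -, h⟩ := exists_iterate_splice_of_iterate hF h'
    exact ⟨k, h⟩

lemma isCycleMin_splice_iff (hF : IsPartialPerm F) (i : Fin m) :
    IsCycleMin (splice F) i ↔ IsCycleMin F i.castSucc := by
  refine and_congr (isCyclic_splice_iff hF i) ⟨fun h j hj => ?_, fun h j hj => ?_⟩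
  · rcases Fin.eq_castSucc_or_eq_last j with ⟨j, rfl⟩ | rfl
    · exact Fin.castSucc_le_castSucc_iff.mpr (h j ((reaches_splice_iff hF i j).mpr hj))
    · exact Fin.le_last _
  · exact Fin.castSucc_le_castSucc_iff.mp (h j.castSucc ((reaches_splice_iff hF i j).mp hj))

lemma isCycleMin_last_iff : IsCycleMin F (Fin.last m) ↔ F (Fin.last m) = some (Fin.last m) := by
  constructor
  · rintro ⟨⟨k, hk, h⟩, hmin⟩
    obtain ⟨k, rfl⟩ := Nat.exists_eq_add_of_lt hk
    obtain ⟨x, hx, -⟩ := iterate_succ_optStep_eq_some.mp h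
    rwa [Fin.last_le_iff.mp (hmin x ⟨1, hx⟩)] at hx
  · intro h
    have hfix (k : ℕ) : (optStep F)^[k] (some (Fin.last m)) = some (Fin.last m) :=
      Function.iterate_fixed h k
    refine ⟨⟨1, one_pos, hfix 1⟩, fun j ⟨k, hk⟩ => ?_⟩
    rw [hfix k, Option.some_inj] at hk
    exact hk.le

open scoped Classical in
lemma numCyclesPP_splice (hF : IsPartialPerm F) :
    numCyclesPP F =
      numCyclesPP (splice F) + if F (Fin.last m) = some (Fin.last m) then 1 else 0 := by
  simp only [numCyclesPP_eq_sum, Fin.sum_univ_castSucc, isCycleMin_splice_iff hF,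
    isCycleMin_last_iff]

end Splice

/-- The admissible image `a` and preimage `p` of a top point inserted into `f`: `(none, none)`
starts a new necklace, `(some (Fin.last m), none)` is a new fixed point, `(a, some i)` puts the
point between `i` and its successor `lower a`, and `(some j, none)` puts it in front of a point
`j` without predecessor. -/
def IsInsertion (f : Fin m → Option (Fin m)) (a : Option (Fin (m + 1))) : Option (Fin m) → Prop
  | none => lower a = none ∨ ∀ i, f i ≠ lower a
  | some i => a ≠ some (Fin.last m) ∧ f i = lower a

def insertTop (f : Fin m → Option (Fin m)) (a : Option (Fin (m + 1))) (p : Option (Fin m)) :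
    Fin (m + 1) → Option (Fin (m + 1)) :=
  Fin.lastCases a fun i => if p = some i then some (Fin.last m) else (f i).map Fin.castSucc

section Insert

variable {f : Fin m → Option (Fin m)} {a : Option (Fin (m + 1))} {p : Option (Fin m)}

@[simp] lemma insertTop_last : insertTop f a p (Fin.last m) = a :=
  Fin.lastCases_last

@[simp] lemma insertTop_castSucc (i : Fin m) :
    insertTop f a p i.castSucc =
      if p = some i then some (Fin.last m) else (f i).map Fin.castSucc :=
  Fin.lastCases_castSucc i

lemma insertTop_castSucc_eq_last_iff (i : Fin m) :
    insertTop f a p i.castSucc = some (Fin.last m) ↔ p = some i := by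
  by_cases h : p = some i <;> simp [h, Fin.castSucc_ne_last]

lemma splice_insertTop (hv : IsInsertion f a p) : splice (insertTop f a p) = f := by
  funext i
  rw [splice, if_congr (insertTop_castSucc_eq_last_iff i) rfl rfl]
  split_ifs with h
  · subst h
    simpa using hv.2.symm
  · simp [h]

lemma isPartialPerm_insertTop (hf : IsPartialPerm f) (hv : IsInsertion f a p) :
    IsPartialPerm (insertTop f a p) := by
  have castSucc_ne_last {i : Fin m} {c : Fin (m + 1)}
      (hi : insertTop f a p i.castSucc = some c) : a ≠ some c := by
    rintro rfl
    by_cases hp : p = some i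
    · subst hp
      exact hv.1 (by simpa using hi.symm)
    · obtain ⟨c, hc, rfl⟩ := Option.map_eq_some_iff.mp (by simpa [hp] using hi)
      rcases p with _ | q
      · exact hv.elim (by simp) (· i (by simpa using hc))
      · exact hp (congrArg some (hf q i c (by simpa using hv.2) hc))
  intro x y c hx hy
  rcases Fin.eq_castSucc_or_eq_last x with ⟨i, rfl⟩ | rfl <;>
    rcases Fin.eq_castSucc_or_eq_last y with ⟨j, rfl⟩ | rfl
  · by_cases hc : c = Fin.last m
    · subst hc
      rw [insertTop_castSucc_eq_last_iff] at hx hy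
      exact congrArg _ (Option.some_injective _ (hx.symm.trans hy))
    · obtain ⟨c, rfl⟩ := Fin.exists_castSucc_eq.mpr hc
      have hpi : p ≠ some i := fun hp => hc (by simpa [hp] using hx.symm)
      have hpj : p ≠ some j := fun hp => hc (by simpa [hp] using hy.symm)
      simp only [insertTop_castSucc, hpi, hpj, if_false, Option.map_eq_some_iff,
        Fin.castSucc_inj, exists_eq_right] at hx hy
      exact congrArg _ (hf i j c hx hy)
  · exact absurd (by simpa using hy) (castSucc_ne_last hx)
  · exact absurd (by simpa using hx) (castSucc_ne_last hy)
  · rfl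

lemma numNecklacesPP_insertTop (hv : IsInsertion f a p) :
    numNecklacesPP (insertTop f a p) =
      numNecklacesPP f + if a = none ∧ p = none then 1 else 0 := by
  rw [numNecklacesPP_eq_sum, numNecklacesPP_eq_sum, Fin.sum_univ_castSucc]
  rcases p with _ | i₀
  · simp
  · obtain ⟨ha, hi₀⟩ := hv
    have hend : f i₀ = none ↔ a = none := by rw [hi₀, lower_eq_none]; simp [ha]
    have hcompl : ∀ i ∈ ({i₀}ᶜ : Finset (Fin m)),
        insertTop f a (some i₀) i.castSucc = (f i).map Fin.castSucc := fun i hi => by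
      simp [Ne.symm (by simpa using hi : i ≠ i₀)]
    rw [Fintype.sum_eq_add_sum_compl i₀, Fintype.sum_eq_add_sum_compl i₀,
      Finset.sum_congr rfl fun i hi => by rw [hcompl i hi]]
    simp [hend, add_comm]

lemma numCyclesPP_insertTop (hf : IsPartialPerm f) (hv : IsInsertion f a p) :
    numCyclesPP (insertTop f a p) =
      numCyclesPP f + if a = some (Fin.last m) then 1 else 0 := by
  rw [numCyclesPP_splice (isPartialPerm_insertTop hf hv), splice_insertTop hv, insertTop_last]

lemma isInsertion_castSucc_iff {j : Fin m} {p₀ : Option (Fin m)}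
    (hp₀ : ∀ i, p₀ = some i ↔ f i = some j) (p : Option (Fin m)) :
    IsInsertion f (some j.castSucc) p ↔ p = p₀ := by
  rcases p with _ | i
  · simp [IsInsertion, eq_comm (a := none), Option.eq_none_iff_forall_ne_some, hp₀]
  · simp [IsInsertion, Fin.castSucc_ne_last, eq_comm (a := some i), hp₀]

variable {F : Fin (m + 1) → Option (Fin (m + 1))}

lemma insertTop_splice (hp : ∀ i, p = some i ↔ F i.castSucc = some (Fin.last m)) :
    insertTop (splice F) (F (Fin.last m)) p = F := by
  funext x
  rcases Fin.eq_castSucc_or_eq_last x with ⟨i, rfl⟩ | rfl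
  · by_cases h : F i.castSucc = some (Fin.last m)
    · simp [(hp i).mpr h, h]
    · simp [mt (hp i).mp h, splice, h, map_castSucc_lower h]
  · exact insertTop_last

lemma isInsertion_splice (hF : IsPartialPerm F)
    (hp : ∀ i, p = some i ↔ F i.castSucc = some (Fin.last m)) :
    IsInsertion (splice F) (F (Fin.last m)) p := by
  rcases p with _ | i
  · refine or_iff_not_imp_left.mpr fun hne i hi => ?_
    obtain ⟨c, hc⟩ := Option.ne_none_iff_exists'.mp hne
    rw [hc, splice_eq_some] at hi
    rcases hi with hi | ⟨hi, -⟩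
    · exact Fin.castSucc_ne_last i (hF _ _ _ hi (lower_eq_some.mp hc))
    · exact absurd ((hp i).mpr hi) (by simp)
  · have hi := (hp i).mp rfl
    refine ⟨fun hl => Fin.castSucc_ne_last i (hF _ _ _ hi hl), ?_⟩
    simp [splice, hi]

end Insert

section Polynomials

open scoped Classical

local notation "α" => (MvPolynomial.X 0 : MvPolynomial (Fin 2) ℚ)
local notation "β" => (MvPolynomial.X 1 : MvPolynomial (Fin 2) ℚ)

noncomputable def weight (f : Fin n → Option (Fin n)) : MvPolynomial (Fin 2) ℚ :=
  α ^ numNecklacesPP f * β ^ numCyclesPP f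

lemma pPoly_eq_sum_weight (n : ℕ) :
    pPoly n = ∑ f : Fin n → Option (Fin n) with IsPartialPerm f, weight f := by
  rw [pPoly, Finset.sum_filter]
  rfl

noncomputable def insertionFactor (a : Option (Fin (m + 1))) (p : Option (Fin m)) :
    MvPolynomial (Fin 2) ℚ :=
  if a = none ∧ p = none then α else if a = some (Fin.last m) then β else 1

variable {f : Fin m → Option (Fin m)}

lemma weight_insertTop (hf : IsPartialPerm f) {a : Option (Fin (m + 1))} {p : Option (Fin m)}
    (hv : IsInsertion f a p) :
    weight (insertTop f a p) = insertionFactor a p * weight f := by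
  rw [weight, weight, numNecklacesPP_insertTop hv, numCyclesPP_insertTop hf hv, insertionFactor]
  by_cases h₁ : a = none ∧ p = none
  · simp [h₁, pow_succ]
    ring
  · by_cases h₂ : a = some (Fin.last m)
    · simp [h₂, pow_succ]
      ring
    · simp [h₁, h₂]

lemma sum_insertionFactor (hf : IsPartialPerm f) :
    ∑ ap : Option (Fin (m + 1)) × Option (Fin m) with IsInsertion f ap.1 ap.2,
      insertionFactor ap.1 ap.2 = m + numNecklacesPP f + α + β := by
  have hnone : ∑ p, (if IsInsertion f none p then insertionFactor none p else 0) =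
      α + numNecklacesPP f := by
    simp [Fintype.sum_option, IsInsertion, insertionFactor, numNecklacesPP_eq_sum]
  have hcastSucc (j : Fin m) : ∑ p, (if IsInsertion f (some j.castSucc) p then
      insertionFactor (some j.castSucc) p else 0) = 1 := by
    obtain ⟨p₀, hp₀⟩ := exists_option_eq_some_iff (P := (f · = some j)) (fun x y => hf x y j)
    simp [isInsertion_castSucc_iff hp₀, insertionFactor, Fin.castSucc_ne_last]
  have hlast : ∑ p, (if IsInsertion f (some (Fin.last m)) p then
      insertionFactor (some (Fin.last m)) p else 0) = β := by
    simp [Fintype.sum_option, IsInsertion, insertionFactor]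
  rw [Finset.sum_filter, Fintype.sum_prod_type, Fintype.sum_option, Fin.sum_univ_castSucc,
    hnone, hlast, Finset.sum_congr rfl fun j _ => hcastSucc j]
  simp
  ring

theorem pPoly_succ_eq_sum (m : ℕ) :
    pPoly (m + 1) = ∑ f : Fin m → Option (Fin m) with IsPartialPerm f,
      (m + numNecklacesPP f + α + β) * weight f := by
  rw [pPoly_eq_sum_weight, ← Finset.sum_fiberwise_of_maps_to (g := splice)
    (t := {f | IsPartialPerm f}) fun F hF => by simpa using isPartialPerm_splice (by simpa using hF)]
  refine Finset.sum_congr rfl fun f hf => ?_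
  rw [Finset.mem_filter] at hf
  rw [← sum_insertionFactor hf.2, Finset.sum_mul]
  symm
  refine Finset.sum_nbij (fun ap => insertTop f ap.1 ap.2) ?_ ?_ ?_ ?_
  · rintro ⟨a, p⟩ hv
    rw [Finset.mem_filter] at hv ⊢
    simp [splice_insertTop hv.2, isPartialPerm_insertTop hf.2 hv.2]
  · rintro ⟨a, p⟩ - ⟨a', p'⟩ - h
    simp only at h
    have hp : p = p' := Option.ext fun i => by
      rw [← insertTop_castSucc_eq_last_iff (f := f) (a := a), h, insertTop_castSucc_eq_last_iff]
    simpa [hp] using congrFun h (Fin.last m)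
  · intro F hF
    obtain ⟨hFpp, rfl⟩ : IsPartialPerm F ∧ splice F = f := by simpa using hF
    obtain ⟨p, hp⟩ := exists_option_eq_some_iff (P := (F ·.castSucc = some (Fin.last m)))
      fun x y hx hy => Fin.castSucc_inj.mp (hFpp _ _ _ hx hy)
    exact ⟨(F (Fin.last m), p), by simpa using isInsertion_splice hFpp hp, insertTop_splice hp⟩
  · rintro ⟨a, p⟩ hv
    exact (weight_insertTop hf.2 (Finset.mem_filter.mp hv).2).symm

noncomputable def eulerAlpha : Derivation ℚ (MvPolynomial (Fin 2) ℚ) (MvPolynomial (Fin 2) ℚ) :=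
  α • pderiv 0

@[simp] lemma eulerAlpha_X_zero : eulerAlpha α = α := by simp [eulerAlpha]

@[simp] lemma eulerAlpha_X_one : eulerAlpha β = 0 := by simp [eulerAlpha]

lemma eulerAlpha_weight (f : Fin n → Option (Fin n)) :
    eulerAlpha (weight f) = numNecklacesPP f * weight f :=
  smul_pderiv_X_pow_mul_X_pow (by decide) _ _

lemma pPoly_zero : pPoly 0 = 1 := by
  simp [pPoly_eq_sum_weight, weight, numNecklacesPP, numCyclesPP, IsPartialPerm]

theorem pPoly_succ (m : ℕ) :
    pPoly (m + 1) = (m + α + β) * pPoly m + eulerAlpha (pPoly m) := by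
  rw [pPoly_succ_eq_sum, pPoly_eq_sum_weight, map_sum, Finset.mul_sum, ← Finset.sum_add_distrib]
  refine Finset.sum_congr rfl fun f _ => ?_
  rw [eulerAlpha_weight]
  ring

theorem eulerAlpha_pPoly_succ (m : ℕ) :
    eulerAlpha (pPoly (m + 1)) = (m + 1) * pPoly (m + 1) - (m + 1) * (m + β) * pPoly m := by
  induction m with
  | zero => simp [pPoly_succ, pPoly_zero]
  | succ n ih =>
    have hn : eulerAlpha (pPoly n) = pPoly (n + 1) - (n + α + β) * pPoly n := by
      rw [pPoly_succ n]
      ring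
    rw [pPoly_succ (n + 1)]
    simp [Derivation.leibniz, ih, hn]
    ring

end Polynomials

end PartialPerm

/-- `p_{n+1}(α,β) = (2n+α+β) p_n(α,β) - n(n+β-1) p_{n-1}(α,β)`,
with `p_{-1} = 0` and `p_0 = 1`.  The case `n = 0` (where `p_{-1} = 0`) reads
`p_1 = (α+β) p_0`, and the cases `n ≥ 1` are stated with shifted index. -/
theorem partial_permutation_recursion :
    pPoly 0 = 1 ∧
    pPoly 1 = (MvPolynomial.X 0 + MvPolynomial.X 1) * pPoly 0 ∧
      ∀ n : ℕ, pPoly (n + 2) =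
        (MvPolynomial.C (2 * (n : ℚ) + 2) + MvPolynomial.X 0 + MvPolynomial.X 1) *
            pPoly (n + 1) -
          MvPolynomial.C ((n : ℚ) + 1) * (MvPolynomial.C (n : ℚ) + MvPolynomial.X 1) *
            pPoly n := by
  refine ⟨PartialPerm.pPoly_zero, by simp [PartialPerm.pPoly_succ, PartialPerm.pPoly_zero],
    fun n => ?_⟩
  rw [PartialPerm.pPoly_succ (n + 1), PartialPerm.eulerAlpha_pPoly_succ]
  simp only [map_add, map_mul, map_natCast, map_ofNat, map_one, Nat.cast_add, Nat.cast_one]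
  ring
end

section
/- The number of partial permutations of {1,...,n} (injective partial self-maps, including the empty map) equals Σ_{k=0}^n C(n,k)² k!, and this equals p_n(1,1) where p_n is the necklace-and-cycle counting polynomial. -/
open Finset PowerSeries

/-! A partial injection is the same as a subset `s` of its domain together with an embedding
`s ↪ β`. Over `Fin n`, the subsets of size `k` thus contribute `C(n,k) · n!/(n-k)! = C(n,k)² k!`.
Evaluated at `(1, 1)`, every partial permutation contributes `1` to `p_n`. -/

section PartialInjective

variable {α β : Type*}

def PartialInjective (f : α → Option β) : Prop :=
  ∀ i j a, f i = some a → f j = some a → i = j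

variable [DecidableEq α]

def partialMapOfEmbedding (p : Σ s : Finset α, (s ↪ β)) : α → Option β :=
  fun i => if h : i ∈ p.1 then some (p.2 ⟨i, h⟩) else none

theorem isSome_partialMapOfEmbedding_iff (p : Σ s : Finset α, (s ↪ β)) (i : α) :
    (partialMapOfEmbedding p i).isSome ↔ i ∈ p.1 := by
  by_cases h : i ∈ p.1 <;> simp [partialMapOfEmbedding, h]

theorem partialInjective_partialMapOfEmbedding (p : Σ s : Finset α, (s ↪ β)) :
    PartialInjective (partialMapOfEmbedding p) := by
  intro i j a hi hj
  obtain ⟨hi_mem, hia⟩ : ∃ h : i ∈ p.1, p.2 ⟨i, h⟩ = a := by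
    simpa [partialMapOfEmbedding] using hi
  obtain ⟨hj_mem, hja⟩ : ∃ h : j ∈ p.1, p.2 ⟨j, h⟩ = a := by
    simpa [partialMapOfEmbedding] using hj
  exact congrArg Subtype.val (p.2.injective (hia.trans hja.symm))

theorem partialMapOfEmbedding_injective :
    Function.Injective (partialMapOfEmbedding (α := α) (β := β)) := by
  rintro ⟨s, g⟩ ⟨t, h⟩ hgh
  obtain rfl : s = t := by
    ext i
    rw [← isSome_partialMapOfEmbedding_iff ⟨s, g⟩, ← isSome_partialMapOfEmbedding_iff ⟨t, h⟩, hgh]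
  obtain rfl : g = h := by
    ext ⟨i, hi⟩
    simpa [partialMapOfEmbedding, hi] using congrFun hgh i
  rfl

theorem exists_partialMapOfEmbedding_eq [Fintype α] {f : α → Option β}
    (hf : PartialInjective f) : ∃ p, partialMapOfEmbedding p = f := by
  let g : {i // i ∈ univ.filter fun i => (f i).isSome} ↪ β :=
    ⟨fun i => (f i).get (mem_filter.mp i.2).2, fun i j hij =>
      Subtype.ext (hf i j _ ((Option.eq_some_of_isSome _).trans (congrArg some hij))
        (Option.eq_some_of_isSome _))⟩
  refine ⟨⟨_, g⟩, funext fun i => ?_⟩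
  by_cases hi : (f i).isSome
  · rw [partialMapOfEmbedding, dif_pos (mem_filter.mpr ⟨mem_univ i, hi⟩)]
    exact Option.some_get hi
  · simp_all [partialMapOfEmbedding]

theorem card_partialInjective [Fintype α] [Fintype β] :
    Nat.card {f : α → Option β // PartialInjective f} =
      ∑ k ∈ range (Fintype.card α + 1),
        (Fintype.card α).choose k * (Fintype.card β).descFactorial k := by
  let e : (Σ s : Finset α, (s ↪ β)) → {f : α → Option β // PartialInjective f} :=
    fun p => ⟨_, partialInjective_partialMapOfEmbedding p⟩
  have he : Function.Bijective e :=
    ⟨fun p q hpq => partialMapOfEmbedding_injective (congrArg Subtype.val hpq),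
      fun ⟨f, hf⟩ => (exists_partialMapOfEmbedding_eq hf).imp fun _ hp => Subtype.ext hp⟩
  rw [← Nat.card_eq_of_bijective e he, Nat.card_eq_fintype_card, Fintype.card_sigma]
  simp only [Fintype.card_embedding_eq, Fintype.card_coe]
  rw [← powerset_univ, sum_powerset_apply_card, card_univ]
  rfl

end PartialInjective

theorem eval_one_pPoly (n : ℕ) :
    MvPolynomial.eval (fun _ => (1 : ℚ)) (pPoly n) =
      Nat.card {f : Fin n → Option (Fin n) // IsPartialPerm f} := by
  classical
  rw [pPoly, map_sum, Nat.card_eq_fintype_card, Fintype.card_subtype, ← sum_boole]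
  refine sum_congr rfl fun f _ => ?_
  split_ifs <;> simp

/-- the number of partial permutations of `{1,…,n}` equals
`Σ_{k=0}^n C(n,k)² k!`, and this equals `p_n(1,1)`. -/
theorem card_partial_permutations (n : ℕ) :
    Nat.card {f : Fin n → Option (Fin n) // IsPartialPerm f} =
        ∑ k ∈ Finset.range (n + 1), n.choose k ^ 2 * k.factorial ∧
      ((Nat.card {f : Fin n → Option (Fin n) // IsPartialPerm f} : ℚ)) =
        MvPolynomial.eval (fun _ => (1 : ℚ)) (pPoly n) := by
  refine ⟨?_, (eval_one_pPoly n).symm⟩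
  calc Nat.card {f : Fin n → Option (Fin n) // IsPartialPerm f}
      = Nat.card {f : Fin n → Option (Fin n) // PartialInjective f} := rfl
    _ = ∑ k ∈ range (n + 1), n.choose k * n.descFactorial k := by
      rw [card_partialInjective, Fintype.card_fin]
    _ = ∑ k ∈ range (n + 1), n.choose k ^ 2 * k.factorial := by
      refine sum_congr rfl fun k _ => ?_
      rw [Nat.descFactorial_eq_factorial_mul_choose]
      ring
end
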